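/- arXiv:2403.02204 — 2 statements merged into one kernel-verified Lean document; each statement's English description precedes it below -/
import Mathlib

section
/- For the matrix M^μ defined from a partition μ with fewer than m positive parts and μ_1 < n, the first row sums to 1, the first column sums to 1, and every other row and every other column sums to 0. -/
/-- The matrix `M^μ` of Definition 2.8, with 0-based matrix indices and the
partition `μ` indexed from 1 (padded with zeros). -/
def Mmu (m n : ℕ) (μ : ℕ → ℕ) (i : Fin m) (j : Fin n) : ℝ :=
  if i.val = 0 then (if j.val = μ 1 then 1 else 0)
  else if j.val = μ (i.val + 1) ∧ μ (i.val + 1) < μ i.val then 1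
  else if j.val = μ i.val ∧ μ (i.val + 1) < μ i.val then -1
  else 0

/-! Row `k ≥ 1` of `M^μ` is `e_{μ_{k+1}} - e_{μ_k}` (which vanishes when `μ_{k+1} = μ_k`), and
row `0` is `e_{μ_1}`. So every row but the first sums to `0`, and the column sums telescope to
`e_{μ_m} = e_0`. -/

theorem Fin.sum_ite_val_eq {R : Type*} [AddCommMonoid R] {n a : ℕ} (ha : a < n) (x : R) :
    ∑ j : Fin n, (if j.val = a then x else 0) = x := by
  simp_rw [← Fin.ext_iff (b := ⟨a, ha⟩)]
  simp

lemma Mmu_zero_left (m n : ℕ) (μ : ℕ → ℕ) (i : Fin m) (hi : i.val = 0) (j : Fin n) :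
    Mmu m n μ i j = if j.val = μ 1 then 1 else 0 := by
  simp [Mmu, hi]

lemma Mmu_of_ne_zero (m n : ℕ) (μ : ℕ → ℕ) (i : Fin m) (hi : i.val ≠ 0)
    (hμi : μ (i.val + 1) ≤ μ i.val) (j : Fin n) :
    Mmu m n μ i j =
      (if j.val = μ (i.val + 1) then 1 else 0) - (if j.val = μ i.val then 1 else 0) := by
  rw [Mmu, if_neg hi]
  rcases hμi.lt_or_eq with hlt | heq
  · by_cases h₁ : j.val = μ (i.val + 1)
    · simp [h₁, hlt, hlt.ne]
    · by_cases h₂ : j.val = μ i.val <;> simp [h₁, h₂, hlt, hlt.ne']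
  · simp [heq]

theorem sum_Mmu_row_zero (m n : ℕ) (hm : 0 < m) (μ : ℕ → ℕ) (hμ1 : μ 1 < n) :
    ∑ j, Mmu m n μ ⟨0, hm⟩ j = 1 := by
  simp_rw [Mmu_zero_left m n μ ⟨0, hm⟩ rfl]
  exact Fin.sum_ite_val_eq hμ1 1

theorem sum_Mmu_row_of_ne_zero (m n : ℕ) (μ : ℕ → ℕ) (i : Fin m) (hi : i.val ≠ 0)
    (hμi : μ (i.val + 1) ≤ μ i.val) (hμn : μ i.val < n) :
    ∑ j, Mmu m n μ i j = 0 := by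
  simp_rw [Mmu_of_ne_zero m n μ i hi hμi, Finset.sum_sub_distrib,
    Fin.sum_ite_val_eq (hμi.trans_lt hμn), Fin.sum_ite_val_eq hμn, sub_self]

theorem sum_Mmu_col (m n : ℕ) (hm : 0 < m) (μ : ℕ → ℕ)
    (hdec : ∀ k, 1 ≤ k → μ (k + 1) ≤ μ k) (j : Fin n) :
    ∑ i, Mmu m n μ i j = if j.val = μ m then 1 else 0 := by
  obtain ⟨m, rfl⟩ : ∃ m', m = m' + 1 := ⟨m - 1, by omega⟩
  set e : ℕ → ℝ := fun k => if j.val = μ k then 1 else 0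
  have hrow : ∀ i : Fin m, Mmu (m + 1) n μ i.succ j = e (i.val + 1 + 1) - e (i.val + 1) :=
    fun i => Mmu_of_ne_zero _ n μ i.succ (by simp) (hdec _ (by simp)) j
  calc ∑ i, Mmu (m + 1) n μ i j
      = e 1 + ∑ i ∈ Finset.range m, (e (i + 1 + 1) - e (i + 1)) := by
        rw [Fin.sum_univ_succ, Mmu_zero_left _ n μ 0 rfl, Finset.sum_congr rfl fun i _ => hrow i,
          Fin.sum_univ_eq_sum_range (fun k => e (k + 1 + 1) - e (k + 1))]
    _ = e (m + 1) := by
        rw [Finset.sum_range_sub (fun k => e (k + 1))]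
        ring

/-- the first row of M^μ sums to 1, the first column sums to 1,
and every other row and column sums to 0. -/
theorem Mmu_row_col_sums (m n : ℕ) (hm : 0 < m) (μ : ℕ → ℕ)
    (hdec : ∀ k, 1 ≤ k → μ (k + 1) ≤ μ k)
    (hlen : μ m = 0)
    (hμ1 : μ 1 < n) :
    (∑ j, Mmu m n μ ⟨0, hm⟩ j) = 1 ∧
    (∑ i, Mmu m n μ i ⟨0, by omega⟩) = 1 ∧
    (∀ i : Fin m, i.val ≠ 0 → (∑ j, Mmu m n μ i j) = 0) ∧
    (∀ j : Fin n, j.val ≠ 0 → (∑ i, Mmu m n μ i j) = 0) := by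
  have hμ_le_μ1 : ∀ k, μ (k + 1) ≤ μ 1 :=
    fun k => antitone_nat_of_succ_le (f := fun k => μ (k + 1)) (fun k => hdec (k + 1) (by omega))
      (Nat.zero_le k)
  refine ⟨sum_Mmu_row_zero m n hm μ hμ1, ?_, fun i hi => ?_, fun j hj => ?_⟩
  · simp [sum_Mmu_col m n hm μ hdec, hlen]
  · obtain ⟨k, hk⟩ : ∃ k, i.val = k + 1 := ⟨i.val - 1, by omega⟩
    exact sum_Mmu_row_of_ne_zero m n μ i hi (hdec _ (by omega))
      ((hk ▸ hμ_le_μ1 k).trans_lt hμ1)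
  · simp [sum_Mmu_col m n hm μ hdec, hlen, hj]
end

section
/- Let μ ⊆ (n−1)^(m−1) be a partition and M^μ the associated partial alternating sign matrix. Then the northwest corner sum c_{ij} of M^μ equals 1 if j > μ_i (i.e., the box (i,j) lies weakly southeast outside μ within the staircase region determined by μ) and 0 if j ≤ μ_i. -/
open Finset

def boundaryMark (μ : ℕ → ℕ) (k b : ℕ) : ℝ :=
  if k ≠ 0 ∧ b = μ k then 1 else 0

lemma Mmu_eq_boundaryMark_sub {m n : ℕ} {μ : ℕ → ℕ} (hdec : ∀ k, 1 ≤ k → μ (k + 1) ≤ μ k)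
    (a : Fin m) (b : Fin n) :
    Mmu m n μ a b = boundaryMark μ (a + 1) b - boundaryMark μ a b := by
  have := hdec a
  unfold Mmu boundaryMark
  split_ifs <;> grind

lemma sum_Iic_Mmu_column {m n : ℕ} {μ : ℕ → ℕ} (hdec : ∀ k, 1 ≤ k → μ (k + 1) ≤ μ k)
    (i : Fin m) (b : Fin n) :
    ∑ a ∈ Iic i, Mmu m n μ a b = boundaryMark μ (i + 1) b := by
  simpa [boundaryMark, Mmu_eq_boundaryMark_sub hdec] using
    Fin.sum_Iic_sub i (fun k : Fin (m + 1) ↦ boundaryMark μ k b)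

lemma Fin.sum_Iic_ite_val_eq {M : Type*} [AddCommMonoid M] {n : ℕ} (j : Fin n) (c : ℕ) (x : M) :
    ∑ b ∈ Iic j, (if (b : ℕ) = c then x else 0) = if c ≤ j then x else 0 := by
  calc ∑ b ∈ Iic j, (if (b : ℕ) = c then x else 0)
      = ∑ b ∈ (Iic j).map Fin.valEmbedding, (if b = c then x else 0) := by
        rw [sum_map]; rfl
    _ = if c ≤ j then x else 0 := by
      rw [Fin.map_valEmbedding_Iic, sum_ite_eq']
      simp only [mem_Iic]

theorem Mmu_corner_sums_general (m n : ℕ) (μ : ℕ → ℕ)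
    (hdec : ∀ k, 1 ≤ k → μ (k + 1) ≤ μ k) :
    ∀ (i : Fin m) (j : Fin n),
      (μ (i.val + 1) < j.val + 1 →
        (∑ a ∈ Finset.Iic i, ∑ b ∈ Finset.Iic j, Mmu m n μ a b) = 1) ∧
      (j.val + 1 ≤ μ (i.val + 1) →
        (∑ a ∈ Finset.Iic i, ∑ b ∈ Finset.Iic j, Mmu m n μ a b) = 0) := by
  intro i j
  have corner : ∑ a ∈ Iic i, ∑ b ∈ Iic j, Mmu m n μ a b = if μ (i + 1) ≤ j then 1 else 0 := by
    rw [sum_comm]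
    simp only [sum_Iic_Mmu_column hdec, boundaryMark, Nat.succ_ne_zero, ne_eq, not_false_eq_true,
      true_and]
    exact Fin.sum_Iic_ite_val_eq j _ 1
  rw [corner]
  exact ⟨fun _ ↦ if_pos (by omega), fun _ ↦ if_neg (by omega)⟩

/-- the northwest corner sum c_{ij} of M^μ equals 1 if j > μ_i
and 0 if j ≤ μ_i (one-based indices). -/
theorem Mmu_corner_sums (m n : ℕ) (μ : ℕ → ℕ)
    (hdec : ∀ k, 1 ≤ k → μ (k + 1) ≤ μ k)
    (hlen : μ m = 0)
    (hμ1 : μ 1 ≤ n - 1) (hn : 0 < n) :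
    ∀ (i : Fin m) (j : Fin n),
      (μ (i.val + 1) < j.val + 1 →
        (∑ a ∈ Finset.Iic i, ∑ b ∈ Finset.Iic j, Mmu m n μ a b) = 1) ∧
      (j.val + 1 ≤ μ (i.val + 1) →
        (∑ a ∈ Finset.Iic i, ∑ b ∈ Finset.Iic j, Mmu m n μ a b) = 0) :=
  Mmu_corner_sums_general m n μ hdec
end
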